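/- Let I be a closed bounded interval of ℝ⁺ with |I| > 0, and let s₁ < s₂ < ⋯ < s_m be nonnegative reals with s_j − s_{j−2} ≥ |I| for all 3 ≤ j ≤ m, s₁ ≥ 0, and s_m ≤ sup(I). Then m ≤ 2·⌈sup(I)/|I|⌉ + 1. -/

import Mathlib

/-! Along the odd indices `1, 3, 5, …` the sequence climbs by at least `|I|` per step, so
`s (2k+1) ≥ k |I| ≥ sup I` for `k = ⌈sup I / |I|⌉`; a further index `2k+2 ≤ m` would then
force `s m > sup I`. -/

lemma add_mul_le_of_sub_two_add_le {s : ℕ → ℝ} {d : ℝ} {m : ℕ}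
    (hsep : ∀ j, 3 ≤ j → j ≤ m → s (j - 2) + d ≤ s j) :
    ∀ n : ℕ, 2 * n + 1 ≤ m → s 1 + n * d ≤ s (2 * n + 1)
  | 0, _ => by simp
  | n + 1, hn => by
    have ih := add_mul_le_of_sub_two_add_le hsep n (by omega)
    have step := hsep (2 * (n + 1) + 1) (by omega) hn
    rw [show 2 * (n + 1) + 1 - 2 = 2 * n + 1 by omega] at step
    push_cast
    linarith

theorem clock_copies_bound_general (m : ℕ) (a b : ℝ)
    (ha : 0 ≤ a) (hab : a < b) (s : ℕ → ℝ)
    (hmono : ∀ i j, 1 ≤ i → i < j → j ≤ m → s i < s j)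
    (hsep : ∀ j, 3 ≤ j → j ≤ m → s (j - 2) + (b - a) ≤ s j)
    (hs1 : 0 ≤ s 1) (hsm : s m ≤ b) :
    (m : ℤ) ≤ 2 * ⌈b / (b - a)⌉ + 1 := by
  have hd : 0 < b - a := sub_pos.2 hab
  have hb_le : b ≤ ⌈b / (b - a)⌉ * (b - a) := (div_le_iff₀ hd).1 (Int.le_ceil _)
  obtain ⟨k, hk⟩ := Int.eq_ofNat_of_zero_le
    (Int.ceil_nonneg (div_nonneg (ha.trans hab.le) hd.le))
  rw [hk] at hb_le ⊢
  by_contra! hm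
  have hclimb := add_mul_le_of_sub_two_add_le hsep k (by omega)
  have hlast := hmono (2 * k + 1) m (by omega) (by omega) le_rfl
  push_cast at hb_le
  linarith

/-- Counting bound: if `0 ≤ s 1 < s 2 < ⋯ < s m ≤ sup(I) = b`, with
`s j - s (j-2) ≥ |I| = b - a > 0` for all `3 ≤ j ≤ m`, where `I = [a,b] ⊆ ℝ⁺`,
then `m ≤ 2⌈b/(b-a)⌉ + 1`. -/
theorem clock_copies_bound (m : ℕ) (hm : 1 ≤ m) (a b : ℝ)
    (ha : 0 ≤ a) (hab : a < b) (s : ℕ → ℝ)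
    (hmono : ∀ i j, 1 ≤ i → i < j → j ≤ m → s i < s j)
    (hsep : ∀ j, 3 ≤ j → j ≤ m → s (j - 2) + (b - a) ≤ s j)
    (hs1 : 0 ≤ s 1) (hsm : s m ≤ b) :
    (m : ℤ) ≤ 2 * ⌈b / (b - a)⌉ + 1 :=
  clock_copies_bound_general m a b ha hab s hmono hsep hs1 hsm
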